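/- arXiv:2411.16261 — 2 statements merged into one kernel-verified Lean document; each statement's English description precedes it below -/
import Mathlib

section
/- Let m > 0 and let c : ℍ → ℝ be a continuous function with c(z) ≥ m for all z. If w : ℍ → ℝ is a bounded C² function satisfying the differential inequality Δ_ℍ w(z) ≥ c(z) · w(z) for all z ∈ ℍ, then w(z) ≤ 0 for all z ∈ ℍ. -/
/-- The upper half-plane, as a subset of `ℂ`. -/
def UpperH : Set ℂ := {z : ℂ | 0 < z.im}

/-- The hyperbolic Laplacian of `u : ℂ → ℝ` at `z`:
`Δ_ℍ u(z) = (Im z)² (∂²u/∂x² + ∂²u/∂y²)(z)`. -/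
noncomputable def hypLaplacian (u : ℂ → ℝ) (z : ℂ) : ℝ :=
  z.im ^ 2 * (iteratedDeriv 2 (fun t : ℝ => u (z + (t : ℂ))) 0 +
              iteratedDeriv 2 (fun t : ℝ => u (z + (t : ℂ) * Complex.I)) 0)

/-- The hyperbolic distance on the upper half-plane. -/
noncomputable def hypDist (z w : ℂ) : ℝ :=
  2 * Real.arsinh (‖z - w‖ / (2 * Real.sqrt (z.im * w.im)))

/-! Fix `z₀ ∈ ℍ` and `δ > 0`. The barrier `L = log cosh d(z₀, ·)` is proper on `ℍ`, vanishes at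
`z₀`, and `Δ_ℍ L ≤ Δ_ℍ (cosh d) / cosh d = 2`. So the bounded-above function `w - δ L` attains
its maximum at some `z₁ ∈ ℍ`, where `c w ≤ Δ_ℍ w ≤ δ Δ_ℍ L ≤ 2δ` forces `w z₁ ≤ 2δ/m`. Hence
`w z₀ = (w - δ L) z₀ ≤ (w - δ L) z₁ ≤ w z₁ ≤ 2δ/m`, and `δ → 0` gives `w z₀ ≤ 0`. -/

open Filter Topology

theorem exists_isMaxOn_of_le_off_isCompact {X α : Type*} [TopologicalSpace X] [LinearOrder α]
    [TopologicalSpace α] [ClosedIciTopology α] {U K : Set X} {f : X → α} {x₀ : X}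
    (hK : IsCompact K) (hKU : K ⊆ U) (hf : ContinuousOn f K) (hx₀ : x₀ ∈ K)
    (hle : ∀ x ∈ U \ K, f x ≤ f x₀) : ∃ x ∈ U, IsMaxOn f U x := by
  obtain ⟨x, hxK, hx⟩ := hK.exists_isMaxOn ⟨x₀, hx₀⟩ hf
  refine ⟨x, hKU hxK, fun y hy => ?_⟩
  by_cases hyK : y ∈ K
  · exact hx hyK
  · exact (hle y ⟨hy, hyK⟩).trans (hx hx₀)

section SecondDerivative

variable {f : ℝ → ℝ} {x₀ : ℝ}

/-- If `f'' x₀ > 0`, the second derivative test makes `x₀` a local minimum as well, so `f` is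
locally constant and `f'' x₀ = 0`. -/
theorem IsLocalMax.iteratedDeriv_two_nonpos (h : IsLocalMax f x₀) (hc : ContinuousAt f x₀) :
    iteratedDeriv 2 f x₀ ≤ 0 := by
  rw [iteratedDeriv_succ, iteratedDeriv_one]
  by_contra! hpos
  have hmin := isLocalMin_of_deriv_deriv_pos hpos h.deriv_eq_zero hc
  have hconst : f =ᶠ[𝓝 x₀] fun _ => f x₀ :=
    (h.and hmin).mono fun x hx => le_antisymm hx.1 hx.2
  have hderiv : deriv f =ᶠ[𝓝 x₀] fun _ => 0 :=
    hconst.eventuallyEq_nhds.mono fun x hx => by rw [hx.deriv_eq, deriv_const]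
  rw [hderiv.deriv_eq, deriv_const] at hpos
  exact hpos.false

theorem iteratedDeriv_two_eq_of_hasDerivAt {f' : ℝ → ℝ} {f'' : ℝ}
    (hf : ∀ᶠ t in 𝓝 x₀, HasDerivAt f (f' t) t) (hf' : HasDerivAt f' f'' x₀) :
    iteratedDeriv 2 f x₀ = f'' := by
  rw [iteratedDeriv_succ, iteratedDeriv_one,
    EventuallyEq.deriv_eq (hf.mono fun t ht => ht.deriv), hf'.deriv]

/-- `(log f)'' = f''/f - (f'/f)²`. -/
theorem iteratedDeriv_two_log_le (hf : ContDiffAt ℝ 2 f x₀) (hpos : 0 < f x₀) :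
    iteratedDeriv 2 (fun t => Real.log (f t)) x₀ ≤ iteratedDeriv 2 f x₀ / f x₀ := by
  have hnear : ∀ᶠ t in 𝓝 x₀, DifferentiableAt ℝ f t ∧ f t ≠ 0 :=
    ((hf.eventually (by simp)).and (hf.continuousAt.eventually_ne hpos.ne')).mono
      fun t ht => ⟨ht.1.differentiableAt (by norm_num), ht.2⟩
  have hlog : deriv (fun t => Real.log (f t)) =ᶠ[𝓝 x₀] fun t => deriv f t / f t :=
    hnear.mono fun t ht => deriv.log ht.1 ht.2
  have hf' : DifferentiableAt ℝ (deriv f) x₀ :=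
    (hf.derivWithin (m := 1) (by norm_num)).differentiableAt (by norm_num)
  rw [iteratedDeriv_succ, iteratedDeriv_one, hlog.deriv_eq,
    deriv_fun_div hf' (hf.differentiableAt (by norm_num)) hpos.ne', iteratedDeriv_succ,
    iteratedDeriv_one, sub_div, pow_two, mul_div_mul_right _ _ hpos.ne']
  exact sub_le_self _ (div_nonneg (mul_self_nonneg _) (mul_self_nonneg _))

end SecondDerivative

section HypLaplacian

variable {u v : ℂ → ℝ} {z : ℂ}

theorem ContDiffAt.comp_add_ofReal {n : WithTop ℕ∞} (hu : ContDiffAt ℝ n u z) :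
    ContDiffAt ℝ n (fun t : ℝ => u (z + t)) 0 := by
  refine ContDiffAt.comp (g := u) 0 (by simpa using hu) ?_
  exact (contDiff_const.add Complex.ofRealCLM.contDiff).contDiffAt

theorem ContDiffAt.comp_add_ofReal_mul_I {n : WithTop ℕ∞} (hu : ContDiffAt ℝ n u z) :
    ContDiffAt ℝ n (fun t : ℝ => u (z + t * Complex.I)) 0 := by
  refine ContDiffAt.comp (g := u) 0 (by simpa using hu) ?_
  exact (contDiff_const.add (Complex.ofRealCLM.contDiff.mul contDiff_const)).contDiffAt

theorem IsLocalMax.hypLaplacian_nonpos (h : IsLocalMax u z) (hu : ContinuousAt u z) :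
    hypLaplacian u z ≤ 0 := by
  have hline : ∀ g : ℝ → ℂ, Continuous g → g 0 = z → iteratedDeriv 2 (fun t => u (g t)) 0 ≤ 0 :=
    fun g hg hg0 => by
      subst hg0
      exact (h.comp_continuous hg.continuousAt).iteratedDeriv_two_nonpos
        (hu.comp hg.continuousAt)
  exact mul_nonpos_of_nonneg_of_nonpos (sq_nonneg _)
    (add_nonpos (hline _ (by fun_prop) (by simp)) (hline _ (by fun_prop) (by simp)))

theorem hypLaplacian_sub_const_mul (hu : ContDiffAt ℝ 2 u z) (hv : ContDiffAt ℝ 2 v z) (δ : ℝ) :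
    hypLaplacian (fun z => u z - δ * v z) z = hypLaplacian u z - δ * hypLaplacian v z := by
  rw [hypLaplacian, hypLaplacian, hypLaplacian,
    iteratedDeriv_fun_sub hu.comp_add_ofReal (contDiffAt_const.mul hv.comp_add_ofReal),
    iteratedDeriv_fun_sub hu.comp_add_ofReal_mul_I (contDiffAt_const.mul hv.comp_add_ofReal_mul_I),
    iteratedDeriv_const_mul_field, iteratedDeriv_const_mul_field]
  ring

theorem IsMaxOn.hypLaplacian_le {U : Set ℂ} {δ : ℝ} (h : IsMaxOn (fun z => u z - δ * v z) U z)
    (hU : U ∈ 𝓝 z) (hu : ContDiffAt ℝ 2 u z) (hv : ContDiffAt ℝ 2 v z) :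
    hypLaplacian u z ≤ δ * hypLaplacian v z := by
  have := (h.isLocalMax hU).hypLaplacian_nonpos
    (hu.continuousAt.sub (continuousAt_const.mul hv.continuousAt))
  rw [hypLaplacian_sub_const_mul hu hv] at this
  linarith

theorem hypLaplacian_log_le (hu : ContDiffAt ℝ 2 u z) (hpos : 0 < u z) :
    hypLaplacian (fun z => Real.log (u z)) z ≤ hypLaplacian u z / u z := by
  have hx := iteratedDeriv_two_log_le hu.comp_add_ofReal (by simpa using hpos)
  have hy := iteratedDeriv_two_log_le hu.comp_add_ofReal_mul_I (by simpa using hpos)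
  simp only [Complex.ofReal_zero, zero_mul, add_zero] at hx hy
  rw [hypLaplacian, hypLaplacian, mul_div_assoc, add_div]
  exact mul_le_mul_of_nonneg_left (add_le_add hx hy) (sq_nonneg _)

end HypLaplacian

/-- `cosh (hypDist z₀ z) = 1 + ‖z - z₀‖² / (2 Im z₀ Im z)`, written over a common denominator. -/
noncomputable def coshDist (z₀ z : ℂ) : ℝ :=
  ((z.re - z₀.re) ^ 2 + z.im ^ 2 + z₀.im ^ 2) / (2 * z₀.im * z.im)

section CoshDist

variable {z₀ z : ℂ}

theorem coshDist_self (hz₀ : z₀.im ≠ 0) : coshDist z₀ z₀ = 1 := by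
  rw [coshDist]
  field_simp
  ring

theorem one_le_coshDist (hz₀ : 0 < z₀.im) (hz : 0 < z.im) : 1 ≤ coshDist z₀ z := by
  rw [coshDist, le_div_iff₀ (by positivity)]
  nlinarith [sq_nonneg (z.re - z₀.re), sq_nonneg (z.im - z₀.im)]

theorem contDiffAt_coshDist {n : WithTop ℕ∞} (hz₀ : z₀.im ≠ 0) (hz : z.im ≠ 0) :
    ContDiffAt ℝ n (coshDist z₀) z := by
  have hre : ContDiff ℝ n Complex.re := Complex.reCLM.contDiff
  have him : ContDiff ℝ n Complex.im := Complex.imCLM.contDiff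
  exact ContDiffAt.div (by fun_prop) (by fun_prop) (by simp [hz₀, hz])

/-- Hyperbolic balls are Euclidean discs: for `Im z > 0`, `coshDist z₀ z ≤ C` means
`(x - a)² + y² + b² ≤ 2 b C y`, where `z = x + iy` and `z₀ = a + ib`. -/
theorem isCompact_coshDist_le (hz₀ : 0 < z₀.im) {C : ℝ} (hC : 0 < C) :
    IsCompact {z ∈ UpperH | coshDist z₀ z ≤ C} := by
  have hdisc : {z ∈ UpperH | coshDist z₀ z ≤ C} =
      {z : ℂ | (z.re - z₀.re) ^ 2 + z.im ^ 2 + z₀.im ^ 2 ≤ 2 * z₀.im * C * z.im} := by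
    ext z
    simp only [UpperH, Set.mem_ofPred_eq, coshDist]
    constructor
    · rintro ⟨hz, hle⟩
      rw [div_le_iff₀ (by positivity)] at hle
      linarith
    · intro hle
      have hz : 0 < z.im :=
        pos_of_mul_pos_right (lt_of_lt_of_le (by positivity) hle) (by positivity)
      exact ⟨hz, by rw [div_le_iff₀ (by positivity)]; linarith⟩
  rw [hdisc]
  refine Metric.isCompact_of_isClosed_isBounded (isClosed_le (by fun_prop) (by fun_prop)) ?_
  refine (Metric.isBounded_closedBall (x := ⟨z₀.re, z₀.im * C⟩) (r := z₀.im * C)).subset ?_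
  intro z hz
  rw [Metric.mem_closedBall, Complex.dist_eq_re_im, Real.sqrt_le_left (by positivity)]
  simp only [Set.mem_ofPred_eq] at hz
  nlinarith

theorem iteratedDeriv_two_coshDist_add_ofReal (hz₀ : z₀.im ≠ 0) (hz : z.im ≠ 0) :
    iteratedDeriv 2 (fun t : ℝ => coshDist z₀ (z + t)) 0 = 1 / (z₀.im * z.im) := by
  obtain ⟨a, b⟩ := z₀
  obtain ⟨x, y⟩ := z
  simp only at hz₀ hz ⊢
  have hline : (fun t : ℝ => coshDist ⟨a, b⟩ (⟨x, y⟩ + t))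
      = fun t => ((x + t - a) ^ 2 + y ^ 2 + b ^ 2) / (2 * b * y) := by
    ext t; simp [coshDist]
  rw [hline]
  refine iteratedDeriv_two_eq_of_hasDerivAt (f' := fun t => (x + t - a) / (b * y))
    (Eventually.of_forall fun t => ?_) ?_
  · refine ((((((hasDerivAt_id' t).const_add x).sub_const a).pow 2).add_const (y ^ 2)).add_const
      (b ^ 2) |>.div_const (2 * b * y)).congr_deriv ?_
    field_simp
    ring
  · exact ((((hasDerivAt_id' (0 : ℝ)).const_add x).sub_const a).div_const (b * y)).congr_deriv
      (by simp)

theorem iteratedDeriv_two_coshDist_add_ofReal_mul_I (hz₀ : z₀.im ≠ 0) (hz : z.im ≠ 0) :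
    iteratedDeriv 2 (fun t : ℝ => coshDist z₀ (z + t * Complex.I)) 0
      = ((z.re - z₀.re) ^ 2 + z₀.im ^ 2) / (z₀.im * z.im ^ 3) := by
  obtain ⟨a, b⟩ := z₀
  obtain ⟨x, y⟩ := z
  simp only at hz₀ hz ⊢
  have hline : (fun t : ℝ => coshDist ⟨a, b⟩ (⟨x, y⟩ + t * Complex.I))
      = fun t => ((x - a) ^ 2 + (y + t) ^ 2 + b ^ 2) / (2 * b * (y + t)) := by
    ext t; simp [coshDist]
  rw [hline]
  refine iteratedDeriv_two_eq_of_hasDerivAt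
    (f' := fun t => ((y + t) ^ 2 - (x - a) ^ 2 - b ^ 2) / (2 * b * (y + t) ^ 2)) ?_ ?_
  · have hne : ∀ᶠ t : ℝ in 𝓝 0, y + t ≠ 0 :=
      (continuous_const_add y).continuousAt.eventually_ne (by simpa using hz)
    filter_upwards [hne] with t ht
    have hnum := ((((hasDerivAt_id' t).const_add y).pow 2).const_add ((x - a) ^ 2)).add_const
      (b ^ 2)
    have hden := ((hasDerivAt_id' t).const_add y).const_mul (2 * b)
    refine (hnum.div hden (by simp [hz₀, ht])).congr_deriv ?_
    simp only [Pi.pow_apply]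
    field_simp
    ring
  · have hnum := ((((hasDerivAt_id' (0 : ℝ)).const_add y).pow 2).sub_const
      ((x - a) ^ 2)).sub_const (b ^ 2)
    have hden := (((hasDerivAt_id' (0 : ℝ)).const_add y).pow 2).const_mul (2 * b)
    refine (hnum.div hden (by simp [hz₀, hz])).congr_deriv ?_
    simp only [Pi.pow_apply, add_zero]
    field_simp
    ring

theorem hypLaplacian_coshDist (hz₀ : z₀.im ≠ 0) (hz : z.im ≠ 0) :
    hypLaplacian (coshDist z₀) z = 2 * coshDist z₀ z := by
  rw [hypLaplacian, iteratedDeriv_two_coshDist_add_ofReal hz₀ hz,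
    iteratedDeriv_two_coshDist_add_ofReal_mul_I hz₀ hz, coshDist]
  field_simp
  ring

theorem contDiffAt_log_coshDist {n : WithTop ℕ∞} (hz₀ : 0 < z₀.im) (hz : 0 < z.im) :
    ContDiffAt ℝ n (fun z => Real.log (coshDist z₀ z)) z :=
  (contDiffAt_coshDist hz₀.ne' hz.ne').log (by linarith [one_le_coshDist hz₀ hz])

theorem hypLaplacian_log_coshDist_le (hz₀ : 0 < z₀.im) (hz : 0 < z.im) :
    hypLaplacian (fun z => Real.log (coshDist z₀ z)) z ≤ 2 := by
  have hpos : 0 < coshDist z₀ z := by linarith [one_le_coshDist hz₀ hz]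
  calc hypLaplacian (fun z => Real.log (coshDist z₀ z)) z
      ≤ hypLaplacian (coshDist z₀) z / coshDist z₀ z :=
        hypLaplacian_log_le (contDiffAt_coshDist hz₀.ne' hz.ne') hpos
    _ = 2 := by rw [hypLaplacian_coshDist hz₀.ne' hz.ne']; field_simp

theorem exists_isMaxOn_sub_mul_log_coshDist {w : ℂ → ℝ} {M δ : ℝ} (hw : ContinuousOn w UpperH)
    (hM : ∀ z ∈ UpperH, w z ≤ M) (hδ : 0 < δ) (hz₀ : z₀ ∈ UpperH) :
    ∃ z ∈ UpperH, IsMaxOn (fun z => w z - δ * Real.log (coshDist z₀ z)) UpperH z := by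
  have hlog₀ : Real.log (coshDist z₀ z₀) = 0 := by
    rw [coshDist_self (ne_of_gt hz₀), Real.log_one]
  refine exists_isMaxOn_of_le_off_isCompact (x₀ := z₀)
    (isCompact_coshDist_le hz₀ (Real.exp_pos ((M - w z₀) / δ))) (Set.sep_subset _ _) ?_
    ⟨hz₀, ?_⟩ ?_
  · have hcont : ContinuousOn (fun z => Real.log (coshDist z₀ z)) UpperH :=
      fun z hz => (contDiffAt_log_coshDist (n := 0) hz₀ hz).continuousAt.continuousWithinAt
    exact (hw.sub (continuousOn_const.mul hcont)).mono (Set.sep_subset _ _)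
  · rw [coshDist_self (ne_of_gt hz₀)]
    exact Real.one_le_exp (div_nonneg (sub_nonneg.2 (hM z₀ hz₀)) hδ.le)
  · rintro z ⟨hz, hfar⟩
    have hlog : (M - w z₀) / δ < Real.log (coshDist z₀ z) := by
      rw [Real.lt_log_iff_exp_lt (by linarith [one_le_coshDist hz₀ hz])]
      exact lt_of_not_ge fun h => hfar ⟨hz, h⟩
    rw [div_lt_iff₀' hδ] at hlog
    simp only [hlog₀, mul_zero, sub_zero]
    linarith [hM z hz]

end CoshDist

theorem omori_yau_nonpositive_general
    (m : ℝ) (hm : 0 < m)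
    (c : ℂ → ℝ)
    (hc_low : ∀ z ∈ UpperH, m ≤ c z)
    (w : ℂ → ℝ)
    (hw_smooth : ContDiffOn ℝ 2 w UpperH)
    (hw_bdd : ∃ M : ℝ, ∀ z ∈ UpperH, |w z| ≤ M)
    (hw_ineq : ∀ z ∈ UpperH, c z * w z ≤ hypLaplacian w z) :
    ∀ z ∈ UpperH, w z ≤ 0 := by
  intro z₀ hz₀
  obtain ⟨M, hM⟩ := hw_bdd
  have hU : IsOpen UpperH := isOpen_lt continuous_const Complex.continuous_im
  refine le_of_forall_pos_le_add fun ε hε => ?_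
  obtain ⟨z₁, hz₁, hmax⟩ := exists_isMaxOn_sub_mul_log_coshDist hw_smooth.continuousOn
    (fun z hz => (le_abs_self _).trans (hM z hz)) (by positivity : 0 < m * ε / 2) hz₀
  have hlap : hypLaplacian w z₁ ≤ m * ε := calc
    hypLaplacian w z₁ ≤ m * ε / 2 * hypLaplacian (fun z => Real.log (coshDist z₀ z)) z₁ :=
      hmax.hypLaplacian_le (hU.mem_nhds hz₁) (hw_smooth.contDiffAt (hU.mem_nhds hz₁))
        (contDiffAt_log_coshDist hz₀ hz₁)
    _ ≤ m * ε / 2 * 2 := by gcongr; exact hypLaplacian_log_coshDist_le hz₀ hz₁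
    _ = m * ε := by ring
  have hw₁ : w z₁ ≤ ε := by
    by_contra! h
    nlinarith [hw_ineq z₁ hz₁, hc_low z₁ hz₁]
  calc w z₀ = w z₀ - m * ε / 2 * Real.log (coshDist z₀ z₀) := by
        rw [coshDist_self (ne_of_gt hz₀), Real.log_one, mul_zero, sub_zero]
    _ ≤ w z₁ - m * ε / 2 * Real.log (coshDist z₀ z₁) := hmax hz₀
    _ ≤ w z₁ := sub_le_self _
        (mul_nonneg (by positivity) (Real.log_nonneg (one_le_coshDist hz₀ hz₁)))
    _ ≤ 0 + ε := by rwa [zero_add]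

/-- Omori–Yau-type maximum principle on the upper half-plane:
a bounded `C²` function `w` with `Δ_ℍ w ≥ c·w` and `c ≥ m > 0` is nonpositive. -/
theorem omori_yau_nonpositive
    (m : ℝ) (hm : 0 < m)
    (c : ℂ → ℝ) (hc_cont : ContinuousOn c UpperH)
    (hc_low : ∀ z ∈ UpperH, m ≤ c z)
    (w : ℂ → ℝ)
    (hw_smooth : ContDiffOn ℝ 2 w UpperH)
    (hw_bdd : ∃ M : ℝ, ∀ z ∈ UpperH, |w z| ≤ M)
    (hw_ineq : ∀ z ∈ UpperH, c z * w z ≤ hypLaplacian w z) :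
    ∀ z ∈ UpperH, w z ≤ 0 :=
  omori_yau_nonpositive_general m hm c hc_low w hw_smooth hw_bdd hw_ineq
end

section
/- Let f : ℍ → ℝ be continuous with f ≥ 0. Then every bounded C² function u : ℍ → ℝ satisfying Δ_ℍ u = 2e^{2u} − 1 + e^{−4u} f on ℍ satisfies u(z) ≤ −ln(2)/2 for all z ∈ ℍ. -/
open Filter Topology

section IteratedDeriv

variable {𝕜 F : Type*} [NontriviallyNormedField 𝕜] [NormedAddCommGroup F] [NormedSpace 𝕜 F]

lemma iteratedDeriv_two (f : 𝕜 → F) : iteratedDeriv 2 f = deriv (deriv f) := by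
  rw [iteratedDeriv_succ', iteratedDeriv_one]

lemma iteratedDeriv_two_eq_of_hasDerivAt_s10 {g g' : 𝕜 → F} {x : 𝕜} {c : F}
    (hg : ∀ᶠ s in 𝓝 x, HasDerivAt g (g' s) s) (hg' : HasDerivAt g' c x) :
    iteratedDeriv 2 g x = c := by
  have hderiv : deriv g =ᶠ[𝓝 x] g' := hg.mono fun s hs => hs.deriv
  rw [iteratedDeriv_two, hderiv.deriv_eq, hg'.deriv]

end IteratedDeriv

lemma IsLocalMax.iteratedDeriv_two_nonpos_s10 {f : ℝ → ℝ} {x : ℝ} (hmax : IsLocalMax f x)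
    (hf : ContinuousAt f x) : iteratedDeriv 2 f x ≤ 0 := by
  by_contra! hpos
  have hmin : IsLocalMin f x :=
    isLocalMin_of_deriv_deriv_pos (by rwa [← iteratedDeriv_two]) hmax.deriv_eq_zero hf
  have hconst : f =ᶠ[𝓝 x] fun _ => f x := by
    filter_upwards [hmax, hmin] with y hy₁ hy₂ using le_antisymm hy₁ hy₂
  rw [(hconst.iteratedDeriv 2).eq_of_nhds, iteratedDeriv_const] at hpos
  simp at hpos

lemma iteratedDeriv_two_le_of_isLocalMax_sub {f g : ℝ → ℝ} {x : ℝ} (c : ℝ)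
    (hf : ContDiffAt ℝ 2 f x) (hg : ContDiffAt ℝ 2 g x)
    (hmax : IsLocalMax (fun t => f t - c * g t) x) :
    iteratedDeriv 2 f x ≤ c * iteratedDeriv 2 g x := by
  have h := hmax.iteratedDeriv_two_nonpos_s10 (hf.continuousAt.sub (hg.continuousAt.const_mul c))
  rw [iteratedDeriv_fun_sub hf (contDiffAt_const.mul hg), iteratedDeriv_const_mul_field] at h
  linarith

namespace Complex

@[fun_prop]
lemma contDiff_re {n : WithTop ℕ∞} : ContDiff ℝ n re := reCLM.contDiff

@[fun_prop]
lemma contDiff_im {n : WithTop ℕ∞} : ContDiff ℝ n im := imCLM.contDiff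

@[fun_prop]
lemma contDiff_ofReal {n : WithTop ℕ∞} : ContDiff ℝ n ((↑) : ℝ → ℂ) := ofRealCLM.contDiff

end Complex

lemma isOpen_upperH : IsOpen UpperH := isOpen_lt continuous_const Complex.continuous_im

lemma I_mem_upperH : Complex.I ∈ UpperH := by simp [UpperH]

lemma hypLaplacian_le_of_isLocalMax_sub {u φ : ℂ → ℝ} {z : ℂ} (c : ℝ)
    (hu : ContDiffAt ℝ 2 u z) (hφ : ContDiffAt ℝ 2 φ z)
    (hmax : IsLocalMax (fun w => u w - c * φ w) z) :
    hypLaplacian u z ≤ c * hypLaplacian φ z := by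
  have line : ∀ γ : ℝ → ℂ, ContDiff ℝ 2 γ → γ 0 = z →
      iteratedDeriv 2 (u ∘ γ) 0 ≤ c * iteratedDeriv 2 (φ ∘ γ) 0 := by
    rintro γ hγ rfl
    exact iteratedDeriv_two_le_of_isLocalMax_sub c (hu.comp 0 hγ.contDiffAt)
      (hφ.comp 0 hγ.contDiffAt) (hmax.comp_continuous hγ.continuous.continuousAt)
  have horiz := line (fun t => z + t) (by fun_prop) (by simp)
  have vert := line (fun t => z + t * Complex.I) (by fun_prop) (by simp)
  rw [hypLaplacian, hypLaplacian, mul_left_comm, mul_add c]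
  exact mul_le_mul_of_nonneg_left (add_le_add horiz vert) (sq_nonneg _)

/-- `log cosh d_ℍ(z, i)`, using `cosh d_ℍ(z, i) = (|z|² + 1) / (2 Im z)`. -/
noncomputable def logCoshDistI (z : ℂ) : ℝ :=
  Real.log (z.re ^ 2 + z.im ^ 2 + 1) - Real.log (2 * z.im)

lemma logCoshDistI_I : logCoshDistI Complex.I = 0 := by
  norm_num [logCoshDistI]

lemma logCoshDistI_nonneg {z : ℂ} (hz : 0 < z.im) : 0 ≤ logCoshDistI z := by
  rw [logCoshDistI, sub_nonneg]
  exact Real.log_le_log (by positivity) (by nlinarith [sq_nonneg (z.im - 1), sq_nonneg z.re])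

lemma logCoshDistI_le_iff {z : ℂ} (hz : 0 < z.im) (C : ℝ) :
    logCoshDistI z ≤ C ↔ z.re ^ 2 + z.im ^ 2 + 1 ≤ 2 * Real.exp C * z.im := by
  rw [logCoshDistI, ← Real.log_div (by positivity) (by positivity),
    Real.log_le_iff_le_exp (by positivity), div_le_iff₀ (by positivity)]
  ring_nf

lemma isCompact_logCoshDistI_sublevel (C : ℝ) :
    IsCompact {z | z ∈ UpperH ∧ logCoshDistI z ≤ C} := by
  have hset : {z | z ∈ UpperH ∧ logCoshDistI z ≤ C} =
      {z : ℂ | z.re ^ 2 + z.im ^ 2 + 1 ≤ 2 * Real.exp C * z.im} := by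
    ext z
    simp only [Set.mem_ofPred_eq]
    refine ⟨fun ⟨hz, h⟩ => (logCoshDistI_le_iff hz C).1 h, fun h => ?_⟩
    have hz : 0 < z.im := by
      have : 0 < Real.exp C * z.im := by nlinarith [sq_nonneg z.re, sq_nonneg z.im]
      exact pos_of_mul_pos_right this (Real.exp_pos C).le
    exact ⟨hz, (logCoshDistI_le_iff hz C).2 h⟩
  rw [hset]
  refine Metric.isCompact_of_isClosed_isBounded (isClosed_le (by fun_prop) (by fun_prop)) ?_
  refine isBounded_iff_forall_norm_le.2 ⟨2 * Real.exp C, fun z hz => ?_⟩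
  have hnorm : ‖z‖ ^ 2 = z.re ^ 2 + z.im ^ 2 := by
    rw [Complex.sq_norm, Complex.normSq_apply]; ring
  nlinarith [Complex.im_le_norm z, Real.exp_pos C, norm_nonneg z, hz.out]

lemma contDiffAt_logCoshDistI {z : ℂ} (hz : z.im ≠ 0) : ContDiffAt ℝ 2 logCoshDistI z :=
  (ContDiffAt.log (by fun_prop) (by positivity)).sub
    (ContDiffAt.log (by fun_prop) (mul_ne_zero two_ne_zero hz))

lemma continuousOn_logCoshDistI : ContinuousOn logCoshDistI UpperH := fun _ hz =>
  (contDiffAt_logCoshDistI (ne_of_gt hz)).continuousAt.continuousWithinAt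

lemma logCoshDistI_add_ofReal (z : ℂ) : (fun t : ℝ => logCoshDistI (z + t)) =
    fun t => Real.log ((z.re + t) ^ 2 + (z.im ^ 2 + 1)) - Real.log (2 * z.im) := by
  ext t
  simp [logCoshDistI, add_assoc]

lemma logCoshDistI_add_ofReal_mul_I (z : ℂ) : (fun t : ℝ => logCoshDistI (z + t * Complex.I)) =
    fun t => Real.log ((z.im + t) ^ 2 + (z.re ^ 2 + 1)) - Real.log (2 * (z.im + t)) := by
  ext t
  have hre : (z + t * Complex.I).re = z.re := by simp
  have him : (z + t * Complex.I).im = z.im + t := by simp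
  rw [logCoshDistI, hre, him]
  ring_nf

lemma hasDerivAt_add_sq_add (a b s : ℝ) :
    HasDerivAt (fun t : ℝ => (a + t) ^ 2 + b) (2 * (a + s)) s := by
  simpa using (((hasDerivAt_id s).const_add a).pow 2).add_const b

lemma iteratedDeriv_two_logCoshDistI_add_ofReal (z : ℂ) :
    iteratedDeriv 2 (fun t : ℝ => logCoshDistI (z + t)) 0 =
      2 * (z.im ^ 2 + 1 - z.re ^ 2) / (z.re ^ 2 + z.im ^ 2 + 1) ^ 2 := by
  rw [logCoshDistI_add_ofReal]
  refine iteratedDeriv_two_eq_of_hasDerivAt_s10 (.of_forall fun s =>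
    ((hasDerivAt_add_sq_add _ _ s).log (by positivity)).sub_const _) ?_
  refine ((hasDerivAt_id (0 : ℝ)).const_add z.re |>.const_mul 2).fun_div
    (hasDerivAt_add_sq_add _ _ 0) (by positivity) |>.congr_deriv ?_
  simp only [id, add_zero]
  field_simp
  ring

lemma iteratedDeriv_two_logCoshDistI_add_ofReal_mul_I {z : ℂ} (hz : z.im ≠ 0) :
    iteratedDeriv 2 (fun t : ℝ => logCoshDistI (z + t * Complex.I)) 0 =
      2 * (z.re ^ 2 + 1 - z.im ^ 2) / (z.re ^ 2 + z.im ^ 2 + 1) ^ 2 + 1 / z.im ^ 2 := by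
  rw [logCoshDistI_add_ofReal_mul_I]
  have hne : ∀ᶠ s in 𝓝 (0 : ℝ), z.im + s ≠ 0 :=
    (continuous_const.add continuous_id).continuousAt.eventually_ne (by simpa using hz)
  have hlin : ∀ s, HasDerivAt (fun t : ℝ => 2 * (z.im + t)) 2 s := fun s => by
    simpa using ((hasDerivAt_id s).const_add z.im).const_mul 2
  refine iteratedDeriv_two_eq_of_hasDerivAt_s10 (hne.mono fun s hs =>
    ((hasDerivAt_add_sq_add _ _ s).log (by positivity)).sub ((hlin s).log (by simpa using hs))) ?_
  have h₁ := ((hasDerivAt_id (0 : ℝ)).const_add z.im |>.const_mul 2).fun_div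
    (hasDerivAt_add_sq_add z.im (z.re ^ 2 + 1) 0) (by positivity)
  have h₂ := (hasDerivAt_const (0 : ℝ) (2 : ℝ)).fun_div (hlin 0) (by simpa using hz)
  refine (h₁.sub h₂).congr_deriv ?_
  simp only [id, add_zero]
  field_simp
  ring

lemma hypLaplacian_logCoshDistI {z : ℂ} (hz : z.im ≠ 0) :
    hypLaplacian logCoshDistI z = 1 + 4 * z.im ^ 2 / (z.re ^ 2 + z.im ^ 2 + 1) ^ 2 := by
  rw [hypLaplacian, iteratedDeriv_two_logCoshDistI_add_ofReal,
    iteratedDeriv_two_logCoshDistI_add_ofReal_mul_I hz]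
  field_simp
  ring

lemma hypLaplacian_logCoshDistI_le {z : ℂ} (hz : 0 < z.im) : hypLaplacian logCoshDistI z ≤ 2 := by
  have hD : 2 * z.im ≤ z.re ^ 2 + z.im ^ 2 + 1 := by
    nlinarith [sq_nonneg (z.im - 1), sq_nonneg z.re]
  have : 4 * z.im ^ 2 / (z.re ^ 2 + z.im ^ 2 + 1) ^ 2 ≤ 1 := by
    rw [div_le_one (by positivity)]
    nlinarith
  rw [hypLaplacian_logCoshDistI hz.ne']
  linarith

lemma exists_isMaxOn_sub_mul_logCoshDistI {u : ℂ → ℝ} (hu : ContinuousOn u UpperH)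
    (hbdd : ∃ M, ∀ z ∈ UpperH, u z ≤ M) {ε : ℝ} (hε : 0 < ε) :
    ∃ p ∈ UpperH, IsMaxOn (fun w => u w - ε * logCoshDistI w) UpperH p := by
  obtain ⟨M, hM⟩ := hbdd
  set C := (M - u Complex.I) / ε
  have hC : 0 ≤ C := div_nonneg (sub_nonneg.2 (hM _ I_mem_upperH)) hε.le
  have hεC : ε * C = M - u Complex.I := mul_div_cancel₀ _ hε.ne'
  have hv : ContinuousOn (fun w => u w - ε * logCoshDistI w) UpperH :=
    hu.sub (continuousOn_const.mul continuousOn_logCoshDistI)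
  have hIK : Complex.I ∈ {z | z ∈ UpperH ∧ logCoshDistI z ≤ C} :=
    ⟨I_mem_upperH, by rwa [logCoshDistI_I]⟩
  obtain ⟨p, ⟨hp, -⟩, hpmax⟩ := (isCompact_logCoshDistI_sublevel C).exists_isMaxOn ⟨_, hIK⟩
    (hv.mono fun z hz => hz.1)
  refine ⟨p, hp, fun w hw => ?_⟩
  by_cases hwC : logCoshDistI w ≤ C
  · exact hpmax ⟨hw, hwC⟩
  · have hIp : u Complex.I - ε * logCoshDistI Complex.I ≤ u p - ε * logCoshDistI p := hpmax hIK
    rw [logCoshDistI_I] at hIp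
    show u w - ε * logCoshDistI w ≤ u p - ε * logCoshDistI p
    linarith [hM w hw, mul_lt_mul_of_pos_left (not_le.1 hwC) hε]

lemma exists_mem_upperH_le_add_and_hypLaplacian_le {u : ℂ → ℝ} (hu : ContDiffOn ℝ 2 u UpperH)
    (hbdd : ∃ M, ∀ z ∈ UpperH, u z ≤ M) {ε : ℝ} (hε : 0 < ε) {z : ℂ} (hz : z ∈ UpperH) :
    ∃ p ∈ UpperH, u z ≤ u p + ε * logCoshDistI z ∧ hypLaplacian u p ≤ 2 * ε := by
  obtain ⟨p, hp, hpmax⟩ := exists_isMaxOn_sub_mul_logCoshDistI hu.continuousOn hbdd hε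
  have hp_nhds : UpperH ∈ 𝓝 p := isOpen_upperH.mem_nhds hp
  refine ⟨p, hp, ?_, ?_⟩
  · have := mul_nonneg hε.le (logCoshDistI_nonneg hp)
    have hzp : u z - ε * logCoshDistI z ≤ u p - ε * logCoshDistI p := hpmax hz
    linarith
  · calc hypLaplacian u p ≤ ε * hypLaplacian logCoshDistI p :=
          hypLaplacian_le_of_isLocalMax_sub ε (hu.contDiffAt hp_nhds)
            (contDiffAt_logCoshDistI (ne_of_gt hp)) (hpmax.isLocalMax hp_nhds)
      _ ≤ ε * 2 := by gcongr; exact hypLaplacian_logCoshDistI_le hp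
      _ = 2 * ε := mul_comm _ _

lemma le_neg_log_two_div_two_of_hypLaplacian_ge {u : ℂ → ℝ} (hu : ContDiffOn ℝ 2 u UpperH)
    (hbdd : ∃ M, ∀ z ∈ UpperH, u z ≤ M)
    (hlap : ∀ z ∈ UpperH, 2 * Real.exp (2 * u z) - 1 ≤ hypLaplacian u z) :
    ∀ z ∈ UpperH, u z ≤ -Real.log 2 / 2 := by
  intro z hz
  have hbound : ∀ ε > 0,
      2 * Real.exp (2 * u z) ≤ (1 + 2 * ε) * Real.exp (2 * ε * logCoshDistI z) := by
    intro ε hε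
    obtain ⟨p, hp, hzp, hp_lap⟩ := exists_mem_upperH_le_add_and_hypLaplacian_le hu hbdd hε hz
    have hp_exp : 2 * Real.exp (2 * u p) ≤ 1 + 2 * ε := by linarith [hlap p hp]
    calc 2 * Real.exp (2 * u z)
        ≤ 2 * Real.exp (2 * u p) * Real.exp (2 * ε * logCoshDistI z) := by
          rw [mul_assoc, ← Real.exp_add]
          gcongr
          linarith
      _ ≤ (1 + 2 * ε) * Real.exp (2 * ε * logCoshDistI z) := by gcongr
  have hlim : Tendsto (fun ε => (1 + 2 * ε) * Real.exp (2 * ε * logCoshDistI z))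
      (𝓝[>] 0) (𝓝 1) := by
    have hcont : Continuous fun ε => (1 + 2 * ε) * Real.exp (2 * ε * logCoshDistI z) := by
      fun_prop
    simpa using (hcont.tendsto 0).mono_left nhdsWithin_le_nhds
  have h : 2 * Real.exp (2 * u z) ≤ 1 :=
    ge_of_tendsto hlim (eventually_mem_nhdsWithin.mono hbound)
  have : 2 * u z ≤ -Real.log 2 := by
    rw [← Real.log_inv, Real.le_log_iff_exp_le (by norm_num)]
    linarith
  linarith

theorem gauss_equation_upper_bound_general
    (f : ℂ → ℝ)
    (hf_nonneg : ∀ z ∈ UpperH, 0 ≤ f z)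
    (u : ℂ → ℝ)
    (hu_smooth : ContDiffOn ℝ 2 u UpperH)
    (hu_bdd : ∃ M : ℝ, ∀ z ∈ UpperH, |u z| ≤ M)
    (hu_eq : ∀ z ∈ UpperH,
      hypLaplacian u z = 2 * Real.exp (2 * u z) - 1 + Real.exp (-4 * u z) * f z) :
    ∀ z ∈ UpperH, u z ≤ -Real.log 2 / 2 := by
  obtain ⟨M, hM⟩ := hu_bdd
  refine le_neg_log_two_div_two_of_hypLaplacian_ge hu_smooth
    ⟨M, fun z hz => (le_abs_self _).trans (hM z hz)⟩ fun z hz => ?_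
  have := mul_nonneg (Real.exp_pos (-4 * u z)).le (hf_nonneg z hz)
  linarith [hu_eq z hz]

/-- A priori upper bound: any bounded `C²` solution of the Gauss equation
with `f ≥ 0` satisfies `u ≤ −ln(2)/2`. -/
theorem gauss_equation_upper_bound
    (f : ℂ → ℝ) (hf_cont : ContinuousOn f UpperH)
    (hf_nonneg : ∀ z ∈ UpperH, 0 ≤ f z)
    (u : ℂ → ℝ)
    (hu_smooth : ContDiffOn ℝ 2 u UpperH)
    (hu_bdd : ∃ M : ℝ, ∀ z ∈ UpperH, |u z| ≤ M)
    (hu_eq : ∀ z ∈ UpperH,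
      hypLaplacian u z = 2 * Real.exp (2 * u z) - 1 + Real.exp (-4 * u z) * f z) :
    ∀ z ∈ UpperH, u z ≤ -Real.log 2 / 2 :=
  gauss_equation_upper_bound_general f hf_nonneg u hu_smooth hu_bdd hu_eq
end
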